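/- Let g ∈ SL(2,ℝ) act on the upper half-plane H² by Möbius transformations, and suppose g fixes no point of H² (i.e., g•z ≠ z for all z ∈ H², so g is hyperbolic or parabolic). Then for every z ∈ H², the equidistant line between z and g•z is disjoint from the equidistant line between g•z and g²•z: there is no w ∈ H² with d(w, z) = d(w, g•z) and d(w, g•z) = d(w, g²•z). -/

import Mathlib

/-!
Conjugating by an element of `SL(2, ℝ)`, we may assume `z = i` and `g • z = t i` with `t ≠ 1`;
the equidistant line between `i` and `t i` is then the Euclidean circle `|x|² = t`.
If `w` is equidistant from `z`, `g • z` and `g² • z`, then `w` and `u = g⁻¹ • w` both lie on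
this circle at the same distance from `i`, so `u = w` or `u = -w̄`. In the first case `w` is a
fixed point of `g`. In the second, comparing imaginary parts in `g • i = t i` and `g • u = w`
shows that `g` has trace zero, so `g` is elliptic and again has a fixed point.
-/

open Matrix
open scoped MatrixGroups

namespace UpperHalfPlane

theorem SL2_denom_ne_zero (g : SL(2, ℝ)) (z : ℍ) : (g 1 0 * z + g 1 1 : ℂ) ≠ 0 := by
  simpa [denom] using denom_ne_zero g z

theorem coe_SL2_smul (g : SL(2, ℝ)) (z : ℍ) :
    (↑(g • z) : ℂ) = (g 0 0 * z + g 0 1) / (g 1 0 * z + g 1 1) := by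
  simp [coe_specialLinearGroup_apply]

theorem SL2_smul_eq_iff (g : SL(2, ℝ)) {z w : ℍ} :
    g • z = w ↔ (g 0 0 * z + g 0 1 : ℂ) = w * (g 1 0 * z + g 1 1) := by
  rw [UpperHalfPlane.ext_iff, coe_SL2_smul, div_eq_iff (SL2_denom_ne_zero g z)]

theorem exists_SL2_smul_eq_self_of_trace_sq_lt_four (g : SL(2, ℝ))
    (h : (g : Matrix (Fin 2) (Fin 2) ℝ).trace ^ 2 < 4) : ∃ z : ℍ, g • z = z := by
  have hell : (SpecialLinearGroup.mapGL ℝ g).IsElliptic := by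
    simp only [GeneralLinearGroup.IsElliptic, SpecialLinearGroup.mapGL_coe_matrix,
      Algebra.algebraMap_self, SpecialLinearGroup.map_apply_coe, RingHom.mapMatrix_id,
      RingHom.id_apply]
    rw [IsElliptic, discr_fin_two, g.det_coe]
    linarith
  exact ⟨fixedPt _ hell, (gl_smul_eq_self_iff_eq_fixedPt (by simp) hell).2 rfl⟩

noncomputable def rotation (θ : ℝ) : SL(2, ℝ) :=
  ⟨!![Real.cos θ, Real.sin θ; -Real.sin θ, Real.cos θ], by
    simp [det_fin_two, ← sq, Real.cos_sq_add_sin_sq]⟩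

theorem rotation_smul_I (θ : ℝ) : rotation θ • I = I := by
  rw [MulAction.compHom_smul_def, gl_smul_I_eq_I_iff_of_pos (by simp)]
  exact ⟨rfl, (neg_neg _).symm⟩

theorem re_rotation_smul_eq_zero_iff (θ : ℝ) (z : ℍ) :
    (rotation θ • z).re = 0 ↔
      z.re * (Real.cos θ ^ 2 - Real.sin θ ^ 2) +
        Real.cos θ * Real.sin θ * (1 - z.re ^ 2 - z.im ^ 2) = 0 := by
  rw [← coe_re, coe_SL2_smul, Complex.div_re, ← add_div,
    div_eq_zero_iff, or_iff_left (Complex.normSq_pos.2 (SL2_denom_ne_zero _ z)).ne']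
  simp only [rotation, of_apply, cons_val', cons_val_zero, cons_val_fin_one, cons_val_one,
    Complex.ofReal_cos, Complex.ofReal_sin, Complex.ofReal_neg, Complex.add_re, Complex.add_im,
    Complex.mul_re, Complex.mul_im, Complex.neg_re, Complex.neg_im, Complex.cos_ofReal_re,
    Complex.cos_ofReal_im, Complex.sin_ofReal_re, Complex.sin_ofReal_im, coe_re, coe_im,
    zero_mul, sub_zero, add_zero, neg_mul, mul_neg]
  constructor <;> intro h <;> linear_combination h

theorem exists_re_rotation_smul_eq_zero (z : ℍ) : ∃ θ, (rotation θ • z).re = 0 := by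
  set f : ℝ → ℝ := fun θ ↦ z.re * (Real.cos θ ^ 2 - Real.sin θ ^ 2) +
    Real.cos θ * Real.sin θ * (1 - z.re ^ 2 - z.im ^ 2)
  have hf : ContinuousOn f (Set.uIcc 0 (Real.pi / 2)) := by fun_prop
  -- `f 0 = z.re` and `f (π / 2) = -z.re`
  have h0 : (0 : ℝ) ∈ Set.uIcc (f 0) (f (Real.pi / 2)) := by
    simpa [f, Set.mem_uIcc] using le_total z.re 0
  obtain ⟨θ, -, hθ⟩ := intermediate_value_uIcc hf h0
  exact ⟨θ, (re_rotation_smul_eq_zero_iff θ z).2 hθ⟩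

theorem exists_SL2_smul_eq_I_and_re_smul_eq_zero (z z' : ℍ) :
    ∃ h : SL(2, ℝ), h • z = I ∧ (h • z').re = 0 := by
  obtain ⟨h₀, hh₀⟩ := MulAction.exists_smul_eq SL(2, ℝ) z I
  obtain ⟨θ, hθ⟩ := exists_re_rotation_smul_eq_zero (h₀ • z')
  exact ⟨rotation θ * h₀, by rw [mul_smul, hh₀, rotation_smul_I], by rwa [mul_smul]⟩

theorem dist_coe_sq (x y : ℍ) : dist (x : ℂ) y ^ 2 = (x.re - y.re) ^ 2 + (x.im - y.im) ^ 2 := by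
  rw [Complex.dist_eq_re_im, Real.sq_sqrt (by positivity), coe_re, coe_re, coe_im, coe_im]

theorem dist_eq_dist_iff {x z z' : ℍ} :
    dist x z = dist x z' ↔ dist (x : ℂ) z ^ 2 / z.im = dist (x : ℂ) z' ^ 2 / z'.im := by
  rw [← Real.cosh_injOn.eq_iff dist_nonneg dist_nonneg, cosh_dist, cosh_dist]
  have := x.im_pos
  constructor <;> intro h <;> field_simp at h ⊢ <;> linarith

theorem re_sq_add_im_sq_eq_of_dist_I_eq {p x : ℍ} (hp : p.re = 0) (hp1 : p.im ≠ 1)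
    (h : dist x I = dist x p) : x.re ^ 2 + x.im ^ 2 = p.im := by
  rw [dist_eq_dist_iff, dist_coe_sq, dist_coe_sq, hp, I_re, I_im, div_one] at h
  field_simp at h
  apply mul_left_cancel₀ (sub_ne_zero.2 hp1)
  linear_combination h

theorem im_eq_of_dist_I_eq {x y : ℍ} (hn : x.re ^ 2 + x.im ^ 2 = y.re ^ 2 + y.im ^ 2)
    (h : dist x I = dist y I) : x.im = y.im := by
  rw [dist_comm, dist_comm y, dist_eq_dist_iff, dist_coe_sq, dist_coe_sq, I_re, I_im] at h
  have := x.im_pos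
  have := y.im_pos
  field_simp at h
  nlinarith

theorem trace_eq_zero_of_smul_I_eq_of_smul_eq {g : SL(2, ℝ)} {p u w : ℍ} (hp : p.re = 0)
    (hp1 : p.im ≠ 1) (hgI : g • I = p) (hre : u.re = -w.re) (him : u.im = w.im)
    (hgu : g • u = w) : (g : Matrix (Fin 2) (Fin 2) ℝ).trace = 0 := by
  have e₁ := congrArg Complex.im ((SL2_smul_eq_iff g).1 hgI)
  have e₂ := congrArg Complex.im ((SL2_smul_eq_iff g).1 hgu)
  simp only [coe_I, Complex.add_im, Complex.mul_im, Complex.ofReal_re, Complex.I_im, mul_one,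
    Complex.ofReal_im, Complex.I_re, mul_zero, add_zero, coe_re, hp, zero_mul, coe_im,
    Complex.add_re, Complex.mul_re, sub_self, zero_add, him, hre, mul_neg, neg_zero, sub_zero]
    at e₁ e₂
  have had : g 0 0 = g 1 1 := mul_right_cancel₀ w.im_pos.ne' (by linear_combination e₂)
  have hd : g 1 1 = 0 := (mul_eq_zero.1 (by linear_combination had - e₁ :
    (p.im - 1) * g 1 1 = 0)).resolve_left (sub_ne_zero.2 hp1)
  rw [trace_fin_two, had, hd, add_zero]

theorem exists_smul_eq_self_of_smul_I_eq {g : SL(2, ℝ)} {p w : ℍ} (hp : p.re = 0) (hpI : p ≠ I)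
    (hgI : g • I = p) (h₁ : dist w I = dist w p) (h₂ : dist w p = dist w (g • p)) :
    ∃ x : ℍ, g • x = x := by
  have hp1 : p.im ≠ 1 := fun h1 ↦ hpI (ext_re_im hp (by simpa using h1))
  set u := g⁻¹ • w
  have hu₁ : dist u I = dist w I := by
    rw [← dist_smul g, smul_inv_smul, hgI, h₁]
  have hu₂ : dist u I = dist u p := by
    rw [hu₁, h₁, h₂, ← dist_smul g⁻¹, inv_smul_smul]
  have hw := re_sq_add_im_sq_eq_of_dist_I_eq hp hp1 h₁
  have hu := re_sq_add_im_sq_eq_of_dist_I_eq hp hp1 hu₂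
  have him : u.im = w.im := im_eq_of_dist_I_eq (hu.trans hw.symm) hu₁
  have hre_sq : u.re ^ 2 = w.re ^ 2 := by linear_combination hu - hw - (u.im + w.im) * him
  rcases sq_eq_sq_iff_eq_or_eq_neg.1 hre_sq with hre | hre
  · exact ⟨w, (inv_smul_eq_iff.1 (ext_re_im hre him)).symm⟩
  · refine exists_SL2_smul_eq_self_of_trace_sq_lt_four g ?_
    rw [trace_eq_zero_of_smul_I_eq_of_smul_eq hp hp1 hgI hre him (smul_inv_smul g w)]
    norm_num

theorem exists_smul_eq_self_of_dist_eq_dist {g : SL(2, ℝ)} {z w : ℍ}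
    (h₁ : dist w z = dist w (g • z)) (h₂ : dist w (g • z) = dist w (g • g • z)) :
    ∃ x : ℍ, g • x = x := by
  by_cases hz : g • z = z
  · exact ⟨z, hz⟩
  obtain ⟨h, hhz, hre⟩ := exists_SL2_smul_eq_I_and_re_smul_eq_zero z (g • z)
  obtain ⟨x, hx⟩ := exists_smul_eq_self_of_smul_I_eq (g := h * g * h⁻¹) (w := h • w) hre
    (by rw [← hhz]; exact fun e ↦ hz (smul_left_cancel _ e)) (by simp [mul_smul, ← hhz])
    (by simpa [← hhz, dist_smul] using h₁) (by simpa [mul_smul, dist_smul] using h₂)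
  exact ⟨h⁻¹ • x, (inv_smul_eq_iff.2 (by simpa [mul_smul] using hx.symm)).symm⟩

end UpperHalfPlane

theorem equidistant_lines_disjoint (g : Matrix.SpecialLinearGroup (Fin 2) ℝ)
    (hg : ∀ z : UpperHalfPlane, g • z ≠ z) (z : UpperHalfPlane) :
    ¬ ∃ w : UpperHalfPlane,
        dist w z = dist w (g • z) ∧ dist w (g • z) = dist w (g • (g • z)) := by
  rintro ⟨w, h₁, h₂⟩
  obtain ⟨x, hx⟩ := UpperHalfPlane.exists_smul_eq_self_of_dist_eq_dist h₁ h₂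
  exact hg x hx
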